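/- Define the tensor product of types by x ⊗ y := (x → (y → I)) → I (i.e. the dual of x → ȳ). Then Δ_{x⊗y} = (L_e ⊗ Δ_x) ⊕ (Δ_y ⊗ Δ_x) ⊕ (Δ_y ⊗ L_e) and λ_{x⊗y} = λ_x λ_y, where L_e = span{I}. -/

import Mathlib

open Matrix Kronecker
open scoped ComplexOrder

/-- Types of higher-order quantum theory. The trivial type `I` is `elem 1`. -/
inductive QT where
  | elem (n : ℕ)
  | arrow (x y : QT)

/-- The index type of the Hilbert space `H_x` associated to a type `x`. -/
def Idx : QT → Type
  | .elem n => Fin n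
  | .arrow x y => Idx x × Idx y

instance idxFintype : (x : QT) → Fintype (Idx x)
  | .elem n => inferInstanceAs (Fintype (Fin n))
  | .arrow x y =>
      letI := idxFintype x; letI := idxFintype y
      inferInstanceAs (Fintype (Idx x × Idx y))

instance idxDecEq : (x : QT) → DecidableEq (Idx x)
  | .elem n => inferInstanceAs (DecidableEq (Fin n))
  | .arrow x y =>
      letI := idxDecEq x; letI := idxDecEq y
      inferInstanceAs (DecidableEq (Idx x × Idx y))

/-- Partial trace over the first tensor factor. -/
noncomputable def ptrA {ι κ : Type} [Fintype ι]
    (M : Matrix (ι × κ) (ι × κ) ℂ) : Matrix κ κ ℂ :=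
  fun k l => ∑ i : ι, M (i, k) (i, l)

/-- Deterministic events of type `x`, defined recursively: for elementary types,
positive unit-trace operators; for `x → y`, positive operators `R` such that
`Tr_x[(Sᵀ ⊗ 1) R] ∈ Det y` for every `S ∈ Det x`. -/
noncomputable def Det : (x : QT) → Set (Matrix (Idx x) (Idx x) ℂ)
  | .elem n => {R | R.PosSemidef ∧ R.trace = 1}
  | .arrow x y =>
      setOf (fun (R : Matrix (Idx x × Idx y) (Idx x × Idx y) ℂ) =>
        R.PosSemidef ∧
        ∀ S ∈ Det x, ptrA ((Sᵀ ⊗ₖ (1 : Matrix (Idx y) (Idx y) ℂ)) * R) ∈ Det y)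

/-- The real subspace of Hermitian operators. -/
noncomputable def hermSub (ι : Type) [Fintype ι] [DecidableEq ι] :
    Submodule ℝ (Matrix ι ι ℂ) where
  carrier := {X | X.IsHermitian}
  add_mem' := fun ha hb => ha.add hb
  zero_mem' := Matrix.isHermitian_zero
  smul_mem' := fun c X hX => by
    show ((c • X)ᴴ = c • X)
    rw [Matrix.conjTranspose_smul, star_trivial, hX.eq]

/-- The real subspace of traceless Hermitian operators. -/
noncomputable def tlHermSub (ι : Type) [Fintype ι] [DecidableEq ι] :
    Submodule ℝ (Matrix ι ι ℂ) where
  carrier := {X | X.IsHermitian ∧ X.trace = 0}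
  add_mem' := fun ha hb => ⟨ha.1.add hb.1, by rw [trace_add, ha.2, hb.2, add_zero]⟩
  zero_mem' := ⟨Matrix.isHermitian_zero, Matrix.trace_zero ι ℂ⟩
  smul_mem' := fun c X hX =>
    ⟨by show ((c • X)ᴴ = c • X)
        rw [Matrix.conjTranspose_smul, star_trivial, hX.1.eq],
     by rw [trace_smul, hX.2, smul_zero]⟩

/-- The Hilbert–Schmidt orthogonal complement of `S` inside `B`. -/
noncomputable def perpWithin {ι : Type} [Fintype ι] [DecidableEq ι]
    (S B : Submodule ℝ (Matrix ι ι ℂ)) : Submodule ℝ (Matrix ι ι ℂ) where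
  carrier := {Z | Z ∈ B ∧ ∀ Y ∈ S, (Y * Z).trace = 0}
  add_mem' := fun ha hb =>
    ⟨B.add_mem ha.1 hb.1, fun Y hY => by
      rw [mul_add, trace_add, ha.2 Y hY, hb.2 Y hY, add_zero]⟩
  zero_mem' := ⟨B.zero_mem, fun Y _ => by simp⟩
  smul_mem' := fun c Z hZ =>
    ⟨B.smul_mem c hZ.1, fun Y hY => by
      rw [Matrix.mul_smul, trace_smul, hZ.2 Y hY, smul_zero]⟩

/-- Tensor product of operator subspaces, spanned by Kronecker products. -/
noncomputable def tensorSub {ι κ : Type} [Fintype ι] [DecidableEq ι]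
    [Fintype κ] [DecidableEq κ]
    (P : Submodule ℝ (Matrix ι ι ℂ)) (Q : Submodule ℝ (Matrix κ κ ℂ)) :
    Submodule ℝ (Matrix (ι × κ) (ι × κ) ℂ) :=
  Submodule.span ℝ {A | ∃ X ∈ P, ∃ Y ∈ Q, A = X ⊗ₖ Y}

/-- The one-dimensional subspace `L_e` spanned by the identity. -/
noncomputable def idSub (ι : Type) [Fintype ι] [DecidableEq ι] :
    Submodule ℝ (Matrix ι ι ℂ) :=
  Submodule.span ℝ {(1 : Matrix ι ι ℂ)}

/-- The subspace `Δ_x` of traceless Hermitian operators characterizing the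
deterministic events of type `x`:
`Δ_A = Traceless(H_A)` for elementary `A`, and
`Δ_{x→y} = [Herm(H_x) ⊗ Δ_y] ⊕ [Δ̄_x ⊗ Δ_y^⊥]`, where `Δ̄_x` is the complement of
`Δ_x` inside the traceless Hermitian operators and `Δ_y^⊥` its orthogonal
complement inside the Hermitian operators. -/
noncomputable def Delta : (x : QT) → Submodule ℝ (Matrix (Idx x) (Idx x) ℂ)
  | .elem n => tlHermSub (Fin n)
  | .arrow x y =>
      (tensorSub (hermSub (Idx x)) (Delta y) ⊔
        tensorSub (perpWithin (Delta x) (tlHermSub (Idx x)))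
          (perpWithin (Delta y) (hermSub (Idx y))) :
        Submodule ℝ (Matrix (Idx x × Idx y) (Idx x × Idx y) ℂ))

/-- The normalization constant `λ_x`: `λ_A = 1/d_A`, `λ_{x→y} = λ_y/(d_x λ_x)`. -/
noncomputable def lam : QT → ℝ
  | .elem n => 1 / n
  | .arrow x y => lam y / (Fintype.card (Idx x) * lam x)

/-- The tensor product of types: `x ⊗ y := (x → (y → I)) → I`. -/
def tens (x y : QT) : QT :=
  QT.arrow (QT.arrow x (QT.arrow y (QT.elem 1))) (QT.elem 1)

/-- The canonical identification of the index set of `H_{x ⊗ y}` with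
`Idx x × Idx y`. -/
def etens (x y : QT) : Idx (tens x y) ≃ Idx x × Idx y :=
  (Equiv.prodUnique (Idx x × (Idx y × Fin 1)) (Fin 1)).trans
    (Equiv.prodCongr (Equiv.refl (Idx x)) (Equiv.prodUnique (Idx y) (Fin 1)))


/-!
Everything is computed inside the real space of Hermitian matrices with the trace pairing
`tr(Y Z)`, which is positive definite there, so every subspace has an orthogonal complement.
Since `Δ_I = 0` and `H_I` is one-dimensional, unfolding `x ⊗ y = (x → (y → I)) → I` shows that,
up to relabelling indices, `Δ_{y→I}` is `Δ̄_y` and `Δ_{x⊗y}` is the complement of `Δ_{x→ȳ}` in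
the traceless Hermitian matrices. Splitting each factor orthogonally as `Herm = L_e ⊕ Δ ⊕ Δ̄`, the
traceless Hermitian matrices on `H_x ⊗ H_y` are the sum of eight of the nine product blocks,
`Δ_{x→ȳ} = Herm_x ⊗ Δ̄_y ⊕ Δ̄_x ⊗ (L_e ⊕ Δ_y)` fills five of them, and the remaining three are
`Δ_x ⊗ L_e`, `Δ_x ⊗ Δ_y` and `L_e ⊗ Δ_y`.
-/

section Hermitian

variable {ι : Type} [Fintype ι]

lemma star_trace_mul_of_isHermitian {Y Z : Matrix ι ι ℂ} (hY : Y.IsHermitian) (hZ : Z.IsHermitian) :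
    star (Y * Z).trace = (Y * Z).trace := by
  rw [← trace_conjTranspose, conjTranspose_mul, hY.eq, hZ.eq, trace_mul_comm]

lemma trace_mul_eq_zero_of_re_eq_zero {Y Z : Matrix ι ι ℂ} (hY : Y.IsHermitian)
    (hZ : Z.IsHermitian) (h : (Y * Z).trace.re = 0) : (Y * Z).trace = 0 := by
  rw [← Complex.conj_eq_iff_re.mp (star_trace_mul_of_isHermitian hY hZ), h, Complex.ofReal_zero]

-- Agrees with the pairing `tr(A B)` on Hermitian matrices and is positive definite everywhere.
noncomputable def hsForm (ι : Type) [Fintype ι] : LinearMap.BilinForm ℝ (Matrix ι ι ℂ) :=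
  LinearMap.mk₂ ℝ (fun A B => (Aᴴ * B).trace.re)
    (fun A A' B => by simp [conjTranspose_add, add_mul])
    (fun c A B => by simp [conjTranspose_smul, Complex.real_smul])
    (fun A B B' => by simp [mul_add])
    (fun c A B => by simp [Complex.real_smul])

lemma hsForm_apply (A B : Matrix ι ι ℂ) : hsForm ι A B = (Aᴴ * B).trace.re := rfl

lemma hsForm_isRefl : (hsForm ι).IsRefl := fun A B h => by
  rwa [hsForm_apply, ← Complex.conj_re, ← Complex.star_def, ← trace_conjTranspose,
    conjTranspose_mul, conjTranspose_conjTranspose]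

lemma eq_zero_of_hsForm_self_eq_zero {A : Matrix ι ι ℂ} (h : hsForm ι A A = 0) : A = 0 := by
  have him := (Complex.nonneg_iff.mp (posSemidef_conjTranspose_mul_self A).trace_nonneg).2
  exact trace_conjTranspose_mul_self_eq_zero_iff.mp (Complex.ext h him.symm)

end Hermitian

section PerpWithin

variable {ι : Type} [Fintype ι] [DecidableEq ι]

@[simp] lemma mem_perpWithin {S B : Submodule ℝ (Matrix ι ι ℂ)} {A : Matrix ι ι ℂ} :
    A ∈ perpWithin S B ↔ A ∈ B ∧ ∀ Y ∈ S, (Y * A).trace = 0 := Iff.rfl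

lemma perpWithin_le (S B : Submodule ℝ (Matrix ι ι ℂ)) : perpWithin S B ≤ B := fun _ h => h.1

-- `P ≤ perpWithin Q ⊤` is how orthogonality of `P` and `Q` for `tr(Y Z)` is expressed below.
lemma le_perpWithin_top_comm {P Q : Submodule ℝ (Matrix ι ι ℂ)} (h : P ≤ perpWithin Q ⊤) :
    Q ≤ perpWithin P ⊤ :=
  fun Y _ => ⟨trivial, fun X hX => by rw [trace_mul_comm]; exact (h hX).2 Y ‹_›⟩

lemma le_perpWithin_perpWithin (S B : Submodule ℝ (Matrix ι ι ℂ)) :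
    S ≤ perpWithin (perpWithin S B) ⊤ :=
  le_perpWithin_top_comm fun _ hZ => ⟨trivial, hZ.2⟩

lemma perpWithin_bot_left (B : Submodule ℝ (Matrix ι ι ℂ)) : perpWithin ⊥ B = B :=
  le_antisymm (perpWithin_le _ _) fun Z hZ =>
    ⟨hZ, fun Y hY => by rw [(Submodule.mem_bot ℝ).mp hY, zero_mul, trace_zero]⟩

lemma perpWithin_sup_left (Q Q' B : Submodule ℝ (Matrix ι ι ℂ)) :
    perpWithin (Q ⊔ Q') B = perpWithin Q B ⊓ perpWithin Q' B := by
  refine le_antisymm (fun Z h => ⟨⟨h.1, fun Y hY => h.2 Y (Submodule.mem_sup_left hY)⟩,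
    ⟨h.1, fun Y hY => h.2 Y (Submodule.mem_sup_right hY)⟩⟩) ?_
  rintro Z ⟨⟨hZ, h⟩, -, h'⟩
  refine ⟨hZ, fun Y hY => ?_⟩
  obtain ⟨y, hy, y', hy', rfl⟩ := Submodule.mem_sup.mp hY
  rw [add_mul, trace_add, h y hy, h' y' hy', add_zero]

lemma span_le_perpWithin_span {s t : Set (Matrix ι ι ℂ)}
    (h : ∀ Y ∈ t, ∀ Z ∈ s, (Y * Z).trace = 0) :
    Submodule.span ℝ s ≤ perpWithin (Submodule.span ℝ t) ⊤ := by
  refine Submodule.span_le.mpr fun Z hZ => ⟨trivial, fun Y hY => ?_⟩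
  induction hY using Submodule.span_induction with
  | mem Y hY => exact h Y hY Z hZ
  | zero => rw [zero_mul, trace_zero]
  | add Y Y' _ _ hY hY' => rw [add_mul, trace_add, hY, hY', add_zero]
  | smul c Y _ hY => rw [smul_mul_assoc, trace_smul, hY, smul_zero]

lemma perpWithin_eq_of_sup_eq {U T B : Submodule ℝ (Matrix ι ι ℂ)} (hB : U ⊔ T = B)
    (hT : T ≤ hermSub ι) (hUT : U ≤ perpWithin T ⊤) : perpWithin T B = U := by
  refine le_antisymm ?_ fun Z hZ => ⟨hB ▸ Submodule.mem_sup_left hZ, (hUT hZ).2⟩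
  rintro _ ⟨hZB, hZT⟩
  obtain ⟨u, hu, t, ht, rfl⟩ := Submodule.mem_sup.mp (hB ▸ hZB)
  -- `t` is orthogonal to itself, and positivity of `tr(tᴴ t)` kills it
  have htt : (tᴴ * t).trace = 0 := by
    rw [(hT ht).eq]
    simpa [mul_add, (hUT hu).2 t ht] using hZT t ht
  rwa [trace_conjTranspose_mul_self_eq_zero_iff.mp htt, add_zero]

lemma sup_perpWithin_eq {S B : Submodule ℝ (Matrix ι ι ℂ)} (hSB : S ≤ B) (hB : B ≤ hermSub ι) :
    S ⊔ perpWithin S B = B := by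
  refine le_antisymm (sup_le hSB (perpWithin_le S B)) fun Z hZ => ?_
  have hcompl : IsCompl S ((hsForm ι).orthogonal S) :=
    (LinearMap.BilinForm.isCompl_orthogonal_iff_disjoint hsForm_isRefl).mpr <|
      Submodule.disjoint_def.mpr fun A hA hA' => eq_zero_of_hsForm_self_eq_zero (hA' A hA)
  obtain ⟨Y, hY, W, hW, rfl⟩ :=
    Submodule.mem_sup.mp (hcompl.sup_eq_top ▸ Submodule.mem_top (x := Z))
  have hWB : W ∈ B := by simpa using B.sub_mem hZ (hSB hY)
  refine Submodule.add_mem_sup hY ⟨hWB, fun Y' hY' => ?_⟩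
  have h := hW Y' hY'
  rw [hsForm_apply, (hB (hSB hY')).eq] at h
  exact trace_mul_eq_zero_of_re_eq_zero (hB (hSB hY')) (hB hWB) h

end PerpWithin

section Identity

variable {ι : Type} [Fintype ι] [DecidableEq ι]

@[simp] lemma mem_hermSub {A : Matrix ι ι ℂ} : A ∈ hermSub ι ↔ A.IsHermitian := Iff.rfl

@[simp] lemma mem_tlHermSub {A : Matrix ι ι ℂ} :
    A ∈ tlHermSub ι ↔ A.IsHermitian ∧ A.trace = 0 := Iff.rfl

lemma mem_idSub {A : Matrix ι ι ℂ} : A ∈ idSub ι ↔ ∃ r : ℝ, r • 1 = A :=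
  Submodule.mem_span_singleton

lemma tlHermSub_le_hermSub : tlHermSub ι ≤ hermSub ι := fun _ h => h.1

lemma idSub_le_hermSub : idSub ι ≤ hermSub ι :=
  (Submodule.span_singleton_le_iff_mem _ _).mpr isHermitian_one

lemma tlHermSub_le_perpWithin_idSub : tlHermSub ι ≤ perpWithin (idSub ι) ⊤ := by
  rintro Z hZ
  refine ⟨trivial, fun Y hY => ?_⟩
  obtain ⟨r, rfl⟩ := mem_idSub.mp hY
  rw [smul_mul_assoc, one_mul, trace_smul, hZ.2, smul_zero]

lemma perpWithin_idSub_hermSub : perpWithin (idSub ι) (hermSub ι) = tlHermSub ι :=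
  le_antisymm (fun Z hZ => ⟨hZ.1, by simpa using hZ.2 1 (Submodule.mem_span_singleton_self _)⟩)
    fun Z hZ => ⟨hZ.1, (tlHermSub_le_perpWithin_idSub hZ).2⟩

lemma idSub_sup_tlHermSub : idSub ι ⊔ tlHermSub ι = hermSub ι := by
  rw [← perpWithin_idSub_hermSub]
  exact sup_perpWithin_eq idSub_le_hermSub le_rfl

lemma tlHermSub_eq_bot [Unique ι] : tlHermSub ι = ⊥ := by
  refine eq_bot_iff.mpr fun A hA => (Submodule.mem_bot ℝ).mpr ?_
  ext i j
  rw [Subsingleton.elim i default, Subsingleton.elim j default]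
  simpa [trace] using hA.2

lemma hermSub_eq_idSub [Unique ι] : hermSub ι = idSub ι := by
  rw [← idSub_sup_tlHermSub, tlHermSub_eq_bot, sup_bot_eq]

end Identity

lemma isHermitian_kronecker {R ι κ : Type*} [CommMagma R] [StarMul R] {X : Matrix ι ι R}
    {Y : Matrix κ κ R}
    (hX : X.IsHermitian) (hY : Y.IsHermitian) : (X ⊗ₖ Y).IsHermitian := by
  rw [IsHermitian, conjTranspose_kronecker, hX.eq, hY.eq]

lemma isHermitian_I_smul_sub_conjTranspose {ι : Type} (A : Matrix ι ι ℂ) :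
    (Complex.I • (A - Aᴴ)).IsHermitian := by
  rw [IsHermitian, conjTranspose_smul, conjTranspose_sub, conjTranspose_conjTranspose,
    Complex.star_def, Complex.conj_I, neg_smul, ← smul_neg, neg_sub]

section Tensor

variable {ι κ : Type} [Fintype ι] [DecidableEq ι] [Fintype κ] [DecidableEq κ]

lemma kronecker_mem_tensorSub {P : Submodule ℝ (Matrix ι ι ℂ)} {Q : Submodule ℝ (Matrix κ κ ℂ)}
    {X : Matrix ι ι ℂ} {Y : Matrix κ κ ℂ} (hX : X ∈ P) (hY : Y ∈ Q) : X ⊗ₖ Y ∈ tensorSub P Q :=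
  Submodule.subset_span ⟨X, hX, Y, hY, rfl⟩

lemma tensorSub_le {P : Submodule ℝ (Matrix ι ι ℂ)} {Q : Submodule ℝ (Matrix κ κ ℂ)}
    {R : Submodule ℝ (Matrix (ι × κ) (ι × κ) ℂ)} (h : ∀ X ∈ P, ∀ Y ∈ Q, X ⊗ₖ Y ∈ R) :
    tensorSub P Q ≤ R :=
  Submodule.span_le.mpr <| by rintro _ ⟨X, hX, Y, hY, rfl⟩; exact h X hX Y hY

lemma tensorSub_mono {P P' : Submodule ℝ (Matrix ι ι ℂ)} {Q Q' : Submodule ℝ (Matrix κ κ ℂ)}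
    (hP : P ≤ P') (hQ : Q ≤ Q') : tensorSub P Q ≤ tensorSub P' Q' :=
  tensorSub_le fun _ hX _ hY => kronecker_mem_tensorSub (hP hX) (hQ hY)

lemma tensorSub_sup_left (P P' : Submodule ℝ (Matrix ι ι ℂ)) (Q : Submodule ℝ (Matrix κ κ ℂ)) :
    tensorSub (P ⊔ P') Q = tensorSub P Q ⊔ tensorSub P' Q := by
  refine le_antisymm (tensorSub_le fun X hX Y hY => ?_)
    (sup_le (tensorSub_mono le_sup_left le_rfl) (tensorSub_mono le_sup_right le_rfl))
  obtain ⟨A, hA, A', hA', rfl⟩ := Submodule.mem_sup.mp hX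
  rw [add_kronecker]
  exact Submodule.add_mem_sup (kronecker_mem_tensorSub hA hY) (kronecker_mem_tensorSub hA' hY)

lemma tensorSub_sup_right (P : Submodule ℝ (Matrix ι ι ℂ)) (Q Q' : Submodule ℝ (Matrix κ κ ℂ)) :
    tensorSub P (Q ⊔ Q') = tensorSub P Q ⊔ tensorSub P Q' := by
  refine le_antisymm (tensorSub_le fun X hX Y hY => ?_)
    (sup_le (tensorSub_mono le_rfl le_sup_left) (tensorSub_mono le_rfl le_sup_right))
  obtain ⟨B, hB, B', hB', rfl⟩ := Submodule.mem_sup.mp hY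
  rw [kronecker_add]
  exact Submodule.add_mem_sup (kronecker_mem_tensorSub hX hB) (kronecker_mem_tensorSub hX hB')

lemma tensorSub_bot_right (P : Submodule ℝ (Matrix ι ι ℂ)) :
    tensorSub P (⊥ : Submodule ℝ (Matrix κ κ ℂ)) = ⊥ :=
  eq_bot_iff.mpr <| tensorSub_le fun X _ Y hY => by
    rw [(Submodule.mem_bot ℝ).mp hY, kronecker_zero]; exact zero_mem _

lemma tensorSub_le_perpWithin_of_left {P P' : Submodule ℝ (Matrix ι ι ℂ)}
    (hP : P ≤ perpWithin P' ⊤) (Q Q' : Submodule ℝ (Matrix κ κ ℂ)) :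
    tensorSub P Q ≤ perpWithin (tensorSub P' Q') ⊤ := by
  refine span_le_perpWithin_span ?_
  rintro _ ⟨X', hX', Y', -, rfl⟩ _ ⟨X, hX, Y, -, rfl⟩
  rw [← mul_kronecker_mul, trace_kronecker, (hP hX).2 X' hX', zero_mul]

lemma tensorSub_le_perpWithin_of_right (P P' : Submodule ℝ (Matrix ι ι ℂ))
    {Q Q' : Submodule ℝ (Matrix κ κ ℂ)} (hQ : Q ≤ perpWithin Q' ⊤) :
    tensorSub P Q ≤ perpWithin (tensorSub P' Q') ⊤ := by
  refine span_le_perpWithin_span ?_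
  rintro _ ⟨X', -, Y', hY', rfl⟩ _ ⟨X, -, Y, hY, rfl⟩
  rw [← mul_kronecker_mul, trace_kronecker, (hQ hY).2 Y' hY', mul_zero]

lemma tensorSub_le_hermSub {P : Submodule ℝ (Matrix ι ι ℂ)} {Q : Submodule ℝ (Matrix κ κ ℂ)}
    (hP : P ≤ hermSub ι) (hQ : Q ≤ hermSub κ) : tensorSub P Q ≤ hermSub (ι × κ) :=
  tensorSub_le fun _ hX _ hY => isHermitian_kronecker (hP hX) (hQ hY)

lemma tensorSub_idSub_idSub : tensorSub (idSub ι) (idSub κ) = idSub (ι × κ) := by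
  refine le_antisymm (tensorSub_le fun X hX Y hY => ?_) ?_
  · obtain ⟨r, rfl⟩ := mem_idSub.mp hX
    obtain ⟨s, rfl⟩ := mem_idSub.mp hY
    rw [smul_kronecker, kronecker_smul, one_kronecker_one, smul_smul]
    exact mem_idSub.mpr ⟨r * s, rfl⟩
  · rw [idSub, Submodule.span_singleton_le_iff_mem, ← one_kronecker_one]
    exact kronecker_mem_tensorSub (Submodule.mem_span_singleton_self _)
      (Submodule.mem_span_singleton_self _)

lemma kronecker_add_conjTranspose_mem (A : Matrix ι ι ℂ) (B : Matrix κ κ ℂ) :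
    A ⊗ₖ B + (A ⊗ₖ B)ᴴ ∈ tensorSub (hermSub ι) (hermSub κ) := by
  have h : A ⊗ₖ B + (A ⊗ₖ B)ᴴ = (2⁻¹ : ℝ) • ((A + Aᴴ) ⊗ₖ (B + Bᴴ))
      + (-2⁻¹ : ℝ) • ((Complex.I • (A - Aᴴ)) ⊗ₖ (Complex.I • (B - Bᴴ))) := by
    ext ⟨a, b⟩ ⟨c, d⟩
    simp only [conjTranspose_kronecker, Matrix.add_apply, Matrix.smul_apply, kroneckerMap_apply,
      conjTranspose_apply, Matrix.sub_apply, smul_eq_mul, Complex.real_smul]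
    push_cast
    linear_combination (1 / 2 * ((A a c - star (A c a)) * (B b d - star (B d b)))) *
      Complex.I_mul_I
  rw [h]
  exact add_mem (Submodule.smul_mem _ _ (kronecker_mem_tensorSub
      (isHermitian_add_transpose_self A) (isHermitian_add_transpose_self B)))
    (Submodule.smul_mem _ _ (kronecker_mem_tensorSub
      (isHermitian_I_smul_sub_conjTranspose A) (isHermitian_I_smul_sub_conjTranspose B)))

lemma tensorSub_hermSub_hermSub : tensorSub (hermSub ι) (hermSub κ) = hermSub (ι × κ) := by
  refine le_antisymm (tensorSub_le_hermSub le_rfl le_rfl) fun M hM => ?_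
  have hM2 : M = (2⁻¹ : ℝ) • (M + Mᴴ) := by
    rw [hM.eq, ← two_smul ℝ M, smul_smul, inv_mul_cancel₀ two_ne_zero, one_smul]
  have hsum : M + Mᴴ = ∑ p : ι × κ, ∑ q : ι × κ,
      (single p q (M p q) + (single p q (M p q))ᴴ) := by
    conv_lhs => rw [matrix_eq_sum_single M]
    simp only [conjTranspose_sum, Finset.sum_add_distrib]
  rw [hM2, hsum]
  refine Submodule.smul_mem _ _ (sum_mem fun ⟨i, k⟩ _ => sum_mem fun ⟨j, l⟩ _ => ?_)
  have hsingle : single (i, k) (j, l) (M (i, k) (j, l)) =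
      single i j (M (i, k) (j, l)) ⊗ₖ single k l (1 : ℂ) := by
    rw [single_kronecker_single, mul_one]
  rw [hsingle]
  exact kronecker_add_conjTranspose_mem _ _

lemma tlHermSub_prod :
    tensorSub (idSub ι) (tlHermSub κ) ⊔ tensorSub (tlHermSub ι) (hermSub κ) =
      tlHermSub (ι × κ) := by
  rw [← perpWithin_idSub_hermSub (ι := ι × κ), ← tensorSub_idSub_idSub]
  refine (perpWithin_eq_of_sup_eq ?_ (tensorSub_le_hermSub idSub_le_hermSub idSub_le_hermSub)
    (sup_le ?_ ?_)).symm
  · rw [sup_comm, ← sup_assoc, ← tensorSub_sup_right, idSub_sup_tlHermSub, ← tensorSub_sup_left,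
      idSub_sup_tlHermSub, tensorSub_hermSub_hermSub]
  · exact tensorSub_le_perpWithin_of_right _ _ tlHermSub_le_perpWithin_idSub
  · exact tensorSub_le_perpWithin_of_left tlHermSub_le_perpWithin_idSub _ _

end Tensor

section Relabel

variable {ι κ μ : Type}

noncomputable abbrev relabel (e : ι ≃ κ) : Matrix ι ι ℂ ≃ₗ[ℝ] Matrix κ κ ℂ :=
  reindexLinearEquiv ℝ ℂ e e

lemma map_relabel_map_relabel (e : ι ≃ κ) (f : κ ≃ μ) (P : Submodule ℝ (Matrix ι ι ℂ)) :
    (P.map (relabel e).toLinearMap).map (relabel f).toLinearMap =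
      P.map (relabel (e.trans f)).toLinearMap :=
  (Submodule.map_comp _ _ P).symm

lemma isHermitian_relabel_iff {e : ι ≃ κ} {A : Matrix ι ι ℂ} :
    (relabel e A).IsHermitian ↔ A.IsHermitian := by
  rw [IsHermitian, IsHermitian, coe_reindexLinearEquiv, conjTranspose_reindex,
    (reindex e e).injective.eq_iff]

lemma mem_map_relabel {e : ι ≃ κ} {P : Submodule ℝ (Matrix ι ι ℂ)} {A : Matrix κ κ ℂ} :
    A ∈ P.map (relabel e).toLinearMap ↔ (relabel e).symm A ∈ P :=
  P.mem_map_equiv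

variable [Fintype ι] [Fintype κ]

lemma trace_relabel (e : ι ≃ κ) (A : Matrix ι ι ℂ) : (relabel e A).trace = A.trace :=
  e.symm.sum_comp fun i => A i i

lemma relabel_mul (e : ι ≃ κ) (A B : Matrix ι ι ℂ) :
    relabel e (A * B) = relabel e A * relabel e B :=
  (reindexLinearEquiv_mul ℝ ℂ e e e A B).symm

variable [DecidableEq ι] [DecidableEq κ]

lemma map_relabel_hermSub (e : ι ≃ κ) :
    (hermSub ι).map (relabel e).toLinearMap = hermSub κ := by
  ext A
  rw [mem_map_relabel, symm_reindexLinearEquiv, mem_hermSub, mem_hermSub, isHermitian_relabel_iff]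

lemma map_relabel_tlHermSub (e : ι ≃ κ) :
    (tlHermSub ι).map (relabel e).toLinearMap = tlHermSub κ := by
  ext A
  rw [mem_map_relabel, symm_reindexLinearEquiv, mem_tlHermSub, mem_tlHermSub,
    isHermitian_relabel_iff, trace_relabel]

lemma map_relabel_perpWithin (e : ι ≃ κ) (S B : Submodule ℝ (Matrix ι ι ℂ)) :
    (perpWithin S B).map (relabel e).toLinearMap =
      perpWithin (S.map (relabel e).toLinearMap) (B.map (relabel e).toLinearMap) := by
  ext A
  rw [mem_map_relabel, mem_perpWithin, mem_perpWithin]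
  refine and_congr mem_map_relabel.symm ⟨fun h Y' hY' => ?_, fun h Y hY => ?_⟩
  · rw [← (relabel e).apply_symm_apply Y', ← (relabel e).apply_symm_apply A, ← relabel_mul,
      trace_relabel]
    exact h _ (mem_map_relabel.mp hY')
  · rw [← trace_relabel e, relabel_mul, (relabel e).apply_symm_apply]
    exact h _ (Submodule.mem_map_of_mem hY)

end Relabel

section Arrow

variable {ι κ μ : Type} [Fintype ι] [DecidableEq ι] [Fintype κ] [DecidableEq κ]
  [Fintype μ] [DecidableEq μ]

lemma tensorSub_map_relabel_right (e : κ ≃ μ) (P : Submodule ℝ (Matrix ι ι ℂ))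
    (Q : Submodule ℝ (Matrix κ κ ℂ)) :
    tensorSub P (Q.map (relabel e).toLinearMap) =
      (tensorSub P Q).map (relabel ((Equiv.refl ι).prodCongr e)).toLinearMap := by
  rw [tensorSub, tensorSub, Submodule.map_span]
  congr 1
  ext A
  constructor
  · rintro ⟨X, hX, _, ⟨Y, hY, rfl⟩, rfl⟩
    exact ⟨X ⊗ₖ Y, ⟨X, hX, Y, hY, rfl⟩, (kroneckerMap_reindex_right _ e e X Y).symm⟩
  · rintro ⟨_, ⟨X, hX, Y, hY, rfl⟩, rfl⟩
    exact ⟨X, hX, _, Submodule.mem_map_of_mem hY, (kroneckerMap_reindex_right _ e e X Y).symm⟩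

lemma map_relabel_prodComm (P : Submodule ℝ (Matrix ι ι ℂ)) (Q : Submodule ℝ (Matrix κ κ ℂ)) :
    (tensorSub P Q).map (relabel (Equiv.prodComm ι κ)).toLinearMap = tensorSub Q P := by
  have hswap : ∀ (X : Matrix ι ι ℂ) (Y : Matrix κ κ ℂ),
      relabel (Equiv.prodComm ι κ) (X ⊗ₖ Y) = Y ⊗ₖ X := fun X Y => by
    ext ⟨b, a⟩ ⟨b', a'⟩
    exact mul_comm _ _
  rw [tensorSub, tensorSub, Submodule.map_span]
  congr 1
  ext A
  constructor
  · rintro ⟨_, ⟨X, hX, Y, hY, rfl⟩, rfl⟩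
    exact ⟨Y, hY, X, hX, hswap X Y⟩
  · rintro ⟨Y, hY, X, hX, rfl⟩
    exact ⟨X ⊗ₖ Y, ⟨X, hX, Y, hY, rfl⟩, hswap X Y⟩

lemma tensorSub_hermSub_of_unique [Unique κ] (P : Submodule ℝ (Matrix ι ι ℂ)) :
    tensorSub P (hermSub κ) = P.map (relabel (Equiv.prodUnique ι κ).symm).toLinearMap := by
  have hone : ∀ X : Matrix ι ι ℂ,
      X ⊗ₖ (1 : Matrix κ κ ℂ) = relabel (Equiv.prodUnique ι κ).symm X := fun X => by
    ext ⟨i, a⟩ ⟨j, b⟩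
    simp [Subsingleton.elim a b]
  refine le_antisymm (tensorSub_le fun X hX Y hY => ?_) ?_
  · rw [hermSub_eq_idSub] at hY
    obtain ⟨r, rfl⟩ := mem_idSub.mp hY
    rw [kronecker_smul, hone]
    exact Submodule.smul_mem _ r (Submodule.mem_map_of_mem hX)
  · rintro _ ⟨X, hX, rfl⟩
    rw [LinearEquiv.coe_coe, ← hone]
    exact kronecker_mem_tensorSub hX isHermitian_one

-- `Delta (x.arrow y)` is `arrowSub (Delta x) (Delta y)` by definition.
noncomputable def arrowSub (P : Submodule ℝ (Matrix ι ι ℂ)) (Q : Submodule ℝ (Matrix κ κ ℂ)) :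
    Submodule ℝ (Matrix (ι × κ) (ι × κ) ℂ) :=
  tensorSub (hermSub ι) Q ⊔ tensorSub (perpWithin P (tlHermSub ι)) (perpWithin Q (hermSub κ))

lemma arrowSub_le_tlHermSub (P : Submodule ℝ (Matrix ι ι ℂ)) {Q : Submodule ℝ (Matrix κ κ ℂ)}
    (hQ : Q ≤ tlHermSub κ) : arrowSub P Q ≤ tlHermSub (ι × κ) :=
  sup_le (tensorSub_le fun X hX Y hY => ⟨isHermitian_kronecker hX (hQ hY).1,
      by rw [trace_kronecker, (hQ hY).2, mul_zero]⟩)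
    (tensorSub_le fun X hX Y hY => ⟨isHermitian_kronecker hX.1.1 hY.1,
      by rw [trace_kronecker, hX.1.2, zero_mul]⟩)

lemma arrowSub_bot_right [Unique κ] (P : Submodule ℝ (Matrix ι ι ℂ)) :
    arrowSub P (⊥ : Submodule ℝ (Matrix κ κ ℂ)) =
      (perpWithin P (tlHermSub ι)).map (relabel (Equiv.prodUnique ι κ).symm).toLinearMap := by
  rw [arrowSub, tensorSub_bot_right, perpWithin_bot_left, bot_sup_eq, tensorSub_hermSub_of_unique]

lemma arrowSub_map_relabel_right (e : κ ≃ μ) (P : Submodule ℝ (Matrix ι ι ℂ))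
    (Q : Submodule ℝ (Matrix κ κ ℂ)) :
    arrowSub P (Q.map (relabel e).toLinearMap) =
      (arrowSub P Q).map (relabel ((Equiv.refl ι).prodCongr e)).toLinearMap := by
  rw [arrowSub, arrowSub, ← map_relabel_hermSub e, ← map_relabel_perpWithin,
    tensorSub_map_relabel_right, tensorSub_map_relabel_right, Submodule.map_sup]

lemma perpWithin_arrowSub_perpWithin {P : Submodule ℝ (Matrix ι ι ℂ)}
    {Q : Submodule ℝ (Matrix κ κ ℂ)}
    (hP : P ≤ tlHermSub ι) (hQ : Q ≤ tlHermSub κ) :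
    perpWithin (arrowSub P (perpWithin Q (tlHermSub κ))) (tlHermSub (ι × κ)) =
      tensorSub P (idSub κ) ⊔ tensorSub P Q ⊔ tensorSub (idSub ι) Q := by
  have hW := arrowSub_le_tlHermSub P (perpWithin_le Q (tlHermSub κ))
  rw [arrowSub] at hW ⊢
  set P' := perpWithin P (tlHermSub ι)
  set Q' := perpWithin Q (tlHermSub κ)
  have hPP' : P ⊔ P' = tlHermSub ι := sup_perpWithin_eq hP tlHermSub_le_hermSub
  have hQQ' : Q ⊔ Q' = tlHermSub κ := sup_perpWithin_eq hQ tlHermSub_le_hermSub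
  have hLP' : idSub ι ≤ perpWithin P' ⊤ :=
    le_perpWithin_top_comm ((perpWithin_le _ _).trans tlHermSub_le_perpWithin_idSub)
  have hLQQ' : idSub κ ⊔ Q ≤ perpWithin Q' ⊤ :=
    sup_le (le_perpWithin_top_comm ((perpWithin_le _ _).trans tlHermSub_le_perpWithin_idSub))
      (le_perpWithin_perpWithin Q _)
  have hQ'perp : perpWithin Q' (hermSub κ) = idSub κ ⊔ Q :=
    perpWithin_eq_of_sup_eq (by rw [sup_assoc, hQQ', idSub_sup_tlHermSub])
      ((perpWithin_le _ _).trans tlHermSub_le_hermSub) hLQQ'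
  rw [hQ'perp] at hW ⊢
  -- both sides are the sum of the same eight of the nine blocks `{L, P, P'} ⊗ {L, Q, Q'}`
  have hsplit : (tensorSub P (idSub κ ⊔ Q) ⊔ tensorSub (idSub ι) Q) ⊔
      (tensorSub (hermSub ι) Q' ⊔ tensorSub P' (idSub κ ⊔ Q)) = tlHermSub (ι × κ) := by
    rw [← tlHermSub_prod, ← idSub_sup_tlHermSub (ι := κ), ← idSub_sup_tlHermSub (ι := ι),
      ← hPP', ← hQQ']
    simp only [tensorSub_sup_left, tensorSub_sup_right]
    simp only [← Submodule.add_eq_sup]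
    abel
  rw [← tensorSub_sup_right]
  refine perpWithin_eq_of_sup_eq hsplit (hW.trans tlHermSub_le_hermSub) ?_
  rw [perpWithin_sup_left]
  exact le_inf
    (sup_le (tensorSub_le_perpWithin_of_right _ _ hLQQ')
      (tensorSub_le_perpWithin_of_right _ _ (le_sup_right.trans hLQQ')))
    (sup_le (tensorSub_le_perpWithin_of_left (le_perpWithin_perpWithin P _) _ _)
      (tensorSub_le_perpWithin_of_left hLP' _ _))

end Arrow

instance : Unique (Idx (QT.elem 1)) := inferInstanceAs (Unique (Fin 1))

lemma Delta_elem_one : Delta (QT.elem 1) = ⊥ := tlHermSub_eq_bot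

lemma Delta_le_tlHermSub : (z : QT) → Delta z ≤ tlHermSub (Idx z)
  | .elem _ => le_rfl
  | .arrow _ v => arrowSub_le_tlHermSub _ (Delta_le_tlHermSub v)

lemma card_Idx_elem (n : ℕ) : Fintype.card (Idx (QT.elem n)) = n := Fintype.card_fin n

lemma card_Idx_arrow (x y : QT) :
    Fintype.card (Idx (x.arrow y)) = Fintype.card (Idx x) * Fintype.card (Idx y) :=
  Fintype.card_prod _ _

lemma lam_eq_zero_of_card_eq_zero : (z : QT) → Fintype.card (Idx z) = 0 → lam z = 0
  | .elem n, h => by rw [card_Idx_elem] at h; simp [lam, h]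
  | .arrow u v, h => by
    rcases Nat.mul_eq_zero.mp ((card_Idx_arrow u v).symm.trans h) with hu | hv
    · simp [lam, hu]
    · simp [lam, lam_eq_zero_of_card_eq_zero v hv]

lemma lam_tens (x y : QT) : lam (tens x y) = lam x * lam y := by
  simp only [tens, lam, card_Idx_arrow, card_Idx_elem, mul_one, Nat.cast_mul]
  rcases eq_or_ne (Fintype.card (Idx x)) 0 with hx | hx
  · simp [hx, lam_eq_zero_of_card_eq_zero x hx]
  rcases eq_or_ne (Fintype.card (Idx y)) 0 with hy | hy
  · simp [hy, lam_eq_zero_of_card_eq_zero y hy]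
  field_simp

/-- Characterization of the tensor product of types:
`Δ_{x⊗y} = (L_e ⊗ Δ_x) ⊕ (Δ_y ⊗ Δ_x) ⊕ (Δ_y ⊗ L_e)` (with the two tensor factors
written in the order `y`-system, `x`-system, as in the paper) and
`λ_{x⊗y} = λ_x λ_y`. -/
theorem delta_lam_tens (x y : QT) :
    Delta (tens x y) =
      Submodule.map
        (Matrix.reindexLinearEquiv ℝ ℂ
          ((etens x y).trans (Equiv.prodComm (Idx x) (Idx y))).symm
          ((etens x y).trans (Equiv.prodComm (Idx x) (Idx y))).symm).toLinearMap
        (tensorSub (idSub (Idx y)) (Delta x) ⊔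
          tensorSub (Delta y) (Delta x) ⊔
          tensorSub (Delta y) (idSub (Idx x))) ∧
    lam (tens x y) = lam x * lam y := by
  refine ⟨?_, lam_tens x y⟩
  have hDelta : Delta (tens x y) = arrowSub (arrowSub (Delta x) (arrowSub (Delta y) ⊥)) ⊥ := by
    rw [← Delta_elem_one]; rfl
  have hswap : tensorSub (Delta x) (idSub (Idx y)) ⊔ tensorSub (Delta x) (Delta y) ⊔
      tensorSub (idSub (Idx x)) (Delta y) =
      (tensorSub (idSub (Idx y)) (Delta x) ⊔ tensorSub (Delta y) (Delta x) ⊔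
        tensorSub (Delta y) (idSub (Idx x))).map (relabel (Equiv.prodComm _ _)).toLinearMap := by
    simp only [Submodule.map_sup, map_relabel_prodComm]
  rw [hDelta, arrowSub_bot_right, arrowSub_bot_right, arrowSub_map_relabel_right,
    ← map_relabel_tlHermSub
      ((Equiv.refl _).prodCongr (Equiv.prodUnique (Idx y) (Idx (QT.elem 1))).symm),
    ← map_relabel_perpWithin,
    perpWithin_arrowSub_perpWithin (Delta_le_tlHermSub x) (Delta_le_tlHermSub y), hswap,
    map_relabel_map_relabel, map_relabel_map_relabel]
  -- both sides relabel along the same bijection `Idx (tens x y) ≃ Idx y × Idx x`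
  rfl
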